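/- arXiv:2204.09044 — 5 statements merged into one kernel-verified Lean document; each statement's English description precedes it below -/
import Mathlib

section
/- Let f ∈ 𝒢 and let z ∈ ℂ. Then the series ∑_{k=0}^∞ (z^k/k!) · ∫_ℝ conj(f(x)) x^k dx converges, and its sum equals ∫_ℝ conj(f(x)) e^{z x} dx. -/
open MeasureTheory Filter ComplexConjugate

/-- The set 𝒢: Schwartz functions `f` such that `x ↦ e^{k x} f(x)` is again a Schwartz
function for every complex `k` (the case `k = 0` says that `f` itself is Schwartz). -/
def MemG (f : ℝ → ℂ) : Prop :=
  ∀ k : ℂ, ∃ g : SchwartzMap ℝ ℂ, ∀ x : ℝ, g x = Complex.exp (k * x) * f x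

/-!
Expand `exp (z x)` in its power series under the integral. The partial sums of
`∑ (z x)ᵏ / k!` are dominated by `|f x| e^{|z| |x|}`, and this is integrable because it is
at most `|e^{|z| x} f x| + |e^{-|z| x} f x|`, a sum of two Schwartz functions; dominated
convergence then exchanges the sum and the integral.
-/

theorem Complex.hasSum_pow_div_factorial_exp (w : ℂ) :
    HasSum (fun k : ℕ => w ^ k / (k.factorial : ℂ)) (Complex.exp w) := by
  rw [Complex.exp_eq_exp_ℂ]
  exact NormedSpace.expSeries_div_hasSum_exp w

theorem Real.tsum_pow_div_factorial (t : ℝ) :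
    ∑' k : ℕ, t ^ k / (k.factorial : ℝ) = Real.exp t := by
  rw [Real.exp_eq_exp_ℝ, NormedSpace.exp_eq_tsum_div]

theorem hasSum_integral_mul_pow_exp {α : Type*} [MeasurableSpace α] {μ : Measure α}
    {g φ : α → ℂ} (hg : AEStronglyMeasurable g μ) (hφ : AEStronglyMeasurable φ μ) (z : ℂ)
    (hint : Integrable (fun x => ‖g x‖ * Real.exp (‖z‖ * ‖φ x‖)) μ) :
    HasSum (fun k : ℕ => z ^ k / (k.factorial : ℂ) * ∫ x, g x * φ x ^ k ∂μ)
      (∫ x, g x * Complex.exp (z * φ x) ∂μ) := by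
  let bound (k : ℕ) (x : α) : ℝ := ‖g x‖ * ((‖z‖ * ‖φ x‖) ^ k / (k.factorial : ℝ))
  have h_tsum (x : α) : ∑' k, bound k x = ‖g x‖ * Real.exp (‖z‖ * ‖φ x‖) := by
    rw [tsum_mul_left, Real.tsum_pow_div_factorial]
  simp_rw [← integral_const_mul]
  refine hasSum_integral_of_dominated_convergence bound
    (fun k => (hg.mul (hφ.pow k)).const_mul _) (fun k => ae_of_all _ fun x => le_of_eq ?_)
    (ae_of_all _ fun x => (Real.summable_pow_div_factorial _).mul_left _)
    (by simpa only [h_tsum] using hint) (ae_of_all _ fun x => ?_)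
  · simp only [bound, norm_mul, norm_div, norm_pow, Complex.norm_natCast, mul_pow]
    ring
  · rw [show (fun k : ℕ => z ^ k / (k.factorial : ℂ) * (g x * φ x ^ k)) =
        fun k => g x * ((z * φ x) ^ k / k.factorial) from funext fun k => by ring]
    exact (Complex.hasSum_pow_div_factorial_exp (z * φ x)).mul_left (g x)

theorem Real.exp_mul_abs_le (c x : ℝ) :
    Real.exp (c * |x|) ≤ Real.exp (c * x) + Real.exp (-c * x) := by
  rcases abs_cases x with ⟨h, -⟩ | ⟨h, -⟩
  · rw [h]
    linarith [Real.exp_pos (-c * x)]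
  · rw [h, mul_neg, ← neg_mul]
    linarith [Real.exp_pos (c * x)]

namespace MemG

theorem continuous {f : ℝ → ℂ} (hf : MemG f) : Continuous f := by
  obtain ⟨g, hg⟩ := hf 0
  convert g.continuous using 1
  ext x
  simp [hg]

theorem integrable_norm_mul_exp_mul_abs {f : ℝ → ℂ} (hf : MemG f) (c : ℝ) :
    Integrable (fun x : ℝ => ‖f x‖ * Real.exp (c * |x|)) := by
  obtain ⟨g₁, hg₁⟩ := hf c
  obtain ⟨g₂, hg₂⟩ := hf (-c : ℝ)
  refine (g₁.integrable.norm.add g₂.integrable.norm).mono'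
    (hf.continuous.norm.mul (by fun_prop)).aestronglyMeasurable (ae_of_all _ fun x => ?_)
  have hnorm (g : SchwartzMap ℝ ℂ) (a : ℝ) (hg : ∀ x : ℝ, g x = Complex.exp (a * x) * f x) :
      ‖g x‖ = Real.exp (a * x) * ‖f x‖ := by
    rw [hg, norm_mul, Complex.norm_exp]
    norm_cast
  rw [Real.norm_of_nonneg (by positivity), Pi.add_apply, hnorm g₁ c hg₁, hnorm g₂ (-c) hg₂,
    ← add_mul, mul_comm]
  exact mul_le_mul_of_nonneg_right (Real.exp_mul_abs_le c x) (norm_nonneg _)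

end MemG

theorem series_for_exp_pairing (f : ℝ → ℂ) (hf : MemG f) (z : ℂ) :
    Tendsto (fun N : ℕ => ∑ k ∈ Finset.range N,
        z ^ k / (k.factorial : ℂ) * ∫ x : ℝ, conj (f x) * (x : ℂ) ^ k)
      atTop (nhds (∫ x : ℝ, conj (f x) * Complex.exp (z * x))) := by
  refine (hasSum_integral_mul_pow_exp
    (Complex.continuous_conj.comp hf.continuous).aestronglyMeasurable
    Complex.continuous_ofReal.aestronglyMeasurable z ?_).tendsto_sum_nat
  simpa only [Function.comp_apply, RCLike.norm_conj, Complex.norm_real, Real.norm_eq_abs]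
    using hf.integrable_norm_mul_exp_mul_abs ‖z‖
end

section
/- For fixed z ∈ ℂ, define the operator T_z on smooth functions f : ℝ → ℂ by (T_z f)(x) = z x f(x) − conj(z) f'(x). Let 𝟙 denote the constant function equal to 1. Then for every n ∈ ℕ and every x ∈ ℝ, (1/n!) (T_zⁿ 𝟙)(x) = ∑_{k=0}^{⌊n/2⌋} (−1)^k |z|^{2k} (x z)^{n−2k} / (2^k (n−2k)! k!), where T_zⁿ denotes the n-fold iterate of T_z. -/
/-!
On functions of the form `x ↦ p(x z)` with `p` a polynomial, `T_z` acts as the scaled Hermite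
recursion `p ↦ X p - c p'` with `c = conj z * z = |z|²`, so `T_zⁿ 𝟙 = Qₙ(x z)` where `Qₙ` is the
`n`-th iterate of that recursion on `1`. Formally `Qₙ = exp(-c D² / 2) Xⁿ`: the Leibniz rule
`D^{2k} (X p) = X D^{2k} p + 2k D^{2k-1} p` gives `exp(-c D²/2) ∘ X = (X - c D) ∘ exp(-c D²/2)`.
Expanding `exp(-c D²/2) Xⁿ` with `D^{2k} Xⁿ = n! / (n - 2k)! X^{n-2k}` yields the sum.
-/

open ComplexConjugate

/-- The operator `T_z f = z x f(x) − conj z f'(x)`. -/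
noncomputable def Tz (z : ℂ) (f : ℝ → ℂ) : ℝ → ℂ :=
  fun x => z * (x : ℂ) * f x - conj z * deriv f x

open Polynomial Finset

noncomputable def hermiteStep {R : Type*} [CommRing R] (c : R) (p : R[X]) : R[X] :=
  X * p - C c * derivative p

section Heat

variable {K : Type*} [Field K]

noncomputable def heatCoeff (c : K) (k : ℕ) : K :=
  (-c / 2) ^ k / k.factorial

/-- `exp (-c D² / 2)` applied to `Xⁿ`; the terms with `2k > n` vanish. -/
noncomputable def heatMonomial (c : K) (n : ℕ) : K[X] :=
  ∑ k ∈ range (n + 1), C (heatCoeff c k) * derivative^[2 * k] (X ^ n)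

lemma heatCoeff_succ_mul [CharZero K] (c : K) (k : ℕ) :
    heatCoeff c (k + 1) * ((2 * (k + 1) : ℕ) : K) = -c * heatCoeff c k := by
  rw [heatCoeff, heatCoeff, Nat.factorial_succ]
  push_cast
  field_simp
  ring

lemma hermiteStep_heatMonomial [CharZero K] (c : K) (n : ℕ) :
    hermiteStep c (heatMonomial c n) = heatMonomial c (n + 1) := by
  have hfirst : ∑ k ∈ range (n + 2), C (heatCoeff c k) * (derivative^[2 * k] (X ^ n) * X) =
      X * heatMonomial c n := by
    have hvanish : derivative^[2 * (n + 1)] (X ^ n : K[X]) = 0 :=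
      iterate_derivative_eq_zero (by rw [natDegree_X_pow]; omega)
    rw [sum_range_succ, hvanish, zero_mul, mul_zero, add_zero, heatMonomial, mul_sum]
    exact sum_congr rfl fun k _ => by ring
  have hsecond : ∑ k ∈ range (n + 2),
      C (heatCoeff c k) * ((2 * k) • derivative^[2 * k - 1] (X ^ n)) =
        -(C c * derivative (heatMonomial c n)) := by
    rw [sum_range_succ', mul_zero, zero_smul, mul_zero, add_zero, heatMonomial, derivative_sum,
      mul_sum, ← sum_neg_distrib]
    refine sum_congr rfl fun k _ => ?_
    rw [show 2 * (k + 1) - 1 = 2 * k + 1 by omega, Function.iterate_succ_apply', nsmul_eq_mul,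
      derivative_C_mul, ← mul_assoc, ← C_eq_natCast, ← C_mul, heatCoeff_succ_mul, C_mul, C_neg]
    ring
  rw [hermiteStep, sub_eq_add_neg, ← hfirst, ← hsecond, ← sum_add_distrib, heatMonomial]
  refine sum_congr rfl fun k _ => ?_
  rw [pow_succ, iterate_derivative_mul_X, mul_add]

lemma iterate_hermiteStep_one [CharZero K] (c : K) (n : ℕ) :
    (hermiteStep c)^[n] 1 = heatMonomial c n := by
  induction n with
  | zero => simp [heatMonomial, heatCoeff]
  | succ n ih => rw [Function.iterate_succ_apply', ih, hermiteStep_heatMonomial]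

lemma heatCoeff_mul_descFactorial [CharZero K] (c : K) {n k : ℕ} (h : 2 * k ≤ n) :
    heatCoeff c k * n.descFactorial (2 * k) =
      n.factorial * ((-1) ^ k * c ^ k / (2 ^ k * (n - 2 * k).factorial * k.factorial)) := by
  have hfact : ((n - 2 * k).factorial : K) ≠ 0 := Nat.cast_ne_zero.2 (Nat.factorial_ne_zero _)
  rw [heatCoeff, ← Nat.factorial_mul_descFactorial h, Nat.cast_mul, div_pow, neg_pow]
  field_simp

lemma eval_heatMonomial (c w : K) (n : ℕ) :
    (heatMonomial c n).eval w =
      ∑ k ∈ range (n + 1), heatCoeff c k * n.descFactorial (2 * k) * w ^ (n - 2 * k) := by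
  simp [heatMonomial, eval_finsetSum, iterate_derivative_X_pow_eq_C_mul, mul_assoc]

end Heat

lemma Tz_semiconj_eval_mul (z : ℂ) :
    Function.Semiconj (fun (p : ℂ[X]) (x : ℝ) => p.eval ((x : ℂ) * z))
      (hermiteStep (conj z * z)) (Tz z) := by
  intro p
  funext x
  have hderiv : deriv (fun y : ℝ => p.eval ((y : ℂ) * z)) x =
      (derivative p).eval ((x : ℂ) * z) * z := by
    simpa using (((p.hasDerivAt _).comp (x : ℂ) ((hasDerivAt_id _).mul_const z)).comp_ofReal).deriv
  simp only [Tz, hermiteStep, hderiv, eval_sub, eval_mul, eval_X, eval_C]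
  ring

theorem iterates_of_Tz_on_one (z : ℂ) (n : ℕ) (x : ℝ) :
    (1 / (n.factorial : ℂ)) * ((Tz z)^[n] (fun _ : ℝ => (1 : ℂ))) x =
      ∑ k ∈ Finset.range (n / 2 + 1),
        (-1) ^ k * (‖z‖ : ℂ) ^ (2 * k) * ((x : ℂ) * z) ^ (n - 2 * k) /
          ((2 : ℂ) ^ k * ((n - 2 * k).factorial : ℂ) * (k.factorial : ℂ)) := by
  have hiter : (Tz z)^[n] (fun _ : ℝ => (1 : ℂ)) x =
      (heatMonomial (conj z * z) n).eval ((x : ℂ) * z) := by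
    simpa [iterate_hermiteStep_one] using
      congrFun ((Tz_semiconj_eval_mul z).iterate_right n 1).symm x
  rw [hiter, eval_heatMonomial, mul_sum, Complex.conj_mul']
  have hsub : range (n / 2 + 1) ⊆ range (n + 1) := range_subset_range.2 (by omega)
  rw [← sum_subset hsub fun k _ hk => ?vanish]
  · refine sum_congr rfl fun k hk => ?_
    have h2k : 2 * k ≤ n := by rw [mem_range] at hk; omega
    have hfact : (n.factorial : ℂ) ≠ 0 := Nat.cast_ne_zero.2 (Nat.factorial_ne_zero _)
    rw [heatCoeff_mul_descFactorial _ h2k, pow_mul]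
    field_simp
  · have h2k : n < 2 * k := by rw [mem_range] at hk; omega
    simp [Nat.descFactorial_eq_zero_iff_lt.2 h2k]
end

section
/- For fixed z ∈ ℂ, define the operator T_z on smooth functions f : ℝ → ℂ by (T_z f)(x) = z x f(x) − conj(z) f'(x). Then for every l ∈ ℕ and every x ∈ ℝ, the series ∑_{n=0}^∞ (1/n!) (T_zⁿ (y ↦ y^l))(x) converges and its sum equals (x − conj(z))^l e^{−|z|²/2} e^{z x}. -/
/-!
Write `f w = w ^ l`, which is entire, and `g s = f (x - s conj z) exp (s z x - s² |z|² / 2)`.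
Differentiating `g` in `s` gives the same expression with `f` replaced by its image under
the holomorphic version of `T_z`, so `g⁽ⁿ⁾ 0 = (T_zⁿ f) x`, as `T_z` commutes with
restriction to the real line. The series is therefore
the Taylor series of the entire function `g` at `0`, evaluated at `1`.
-/

open Filter ComplexConjugate

noncomputable def complexTz (z : ℂ) (f : ℂ → ℂ) : ℂ → ℂ :=
  fun w => z * w * f w - conj z * deriv f w

theorem differentiable_complexTz (z : ℂ) {f : ℂ → ℂ} (hf : Differentiable ℂ f) :
    Differentiable ℂ (complexTz z f) :=
  ((differentiable_id.const_mul z).mul hf).sub (hf.deriv.const_mul _)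

theorem differentiable_iterate_complexTz (z : ℂ) {f : ℂ → ℂ} (hf : Differentiable ℂ f)
    (n : ℕ) : Differentiable ℂ ((complexTz z)^[n] f) := by
  induction n with
  | zero => exact hf
  | succ n ih => rw [Function.iterate_succ_apply']; exact differentiable_complexTz z ih

theorem Tz_comp_ofReal (z : ℂ) {f : ℂ → ℂ} (hf : Differentiable ℂ f) :
    Tz z (fun y : ℝ => f y) = fun y : ℝ => complexTz z f y := by
  funext y
  simp only [Tz, complexTz, ((hf y).hasDerivAt.comp_ofReal).deriv]

theorem iterate_Tz_comp_ofReal (z : ℂ) {f : ℂ → ℂ} (hf : Differentiable ℂ f) (n : ℕ) :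
    (Tz z)^[n] (fun y : ℝ => f y) = fun y : ℝ => (complexTz z)^[n] f y := by
  induction n with
  | zero => rfl
  | succ n ih =>
    rw [Function.iterate_succ_apply', Function.iterate_succ_apply', ih,
      Tz_comp_ofReal z (differentiable_iterate_complexTz z hf n)]

noncomputable def displacedProfile (z : ℂ) (f : ℂ → ℂ) (w : ℂ) (s : ℂ) : ℂ :=
  f (w - s * conj z) * Complex.exp (s * z * w - s ^ 2 * (z * conj z) / 2)

theorem hasDerivAt_displacedProfile (z : ℂ) {f : ℂ → ℂ} (hf : Differentiable ℂ f)
    (w s : ℂ) :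
    HasDerivAt (displacedProfile z f w) (displacedProfile z (complexTz z f) w s) s := by
  have hshift : HasDerivAt (fun s : ℂ => f (w - s * conj z))
      (deriv f (w - s * conj z) * -conj z) s :=
    (hf _).hasDerivAt.comp s (by simpa using ((hasDerivAt_id s).mul_const (conj z)).const_sub w)
  have hexponent : HasDerivAt (fun s : ℂ => s * z * w - s ^ 2 * (z * conj z) / 2)
      (z * w - s * (z * conj z)) s := by
    have hlin := ((hasDerivAt_id s).mul_const z).mul_const w
    have hquad := ((hasDerivAt_pow 2 s).mul_const (z * conj z)).div_const 2
    refine (hlin.sub hquad).congr_deriv ?_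
    norm_num
    ring
  refine (hshift.mul hexponent.cexp).congr_deriv ?_
  unfold displacedProfile complexTz
  ring

theorem iteratedDeriv_displacedProfile (z : ℂ) {f : ℂ → ℂ} (hf : Differentiable ℂ f)
    (w : ℂ) (n : ℕ) :
    iteratedDeriv n (displacedProfile z f w) = displacedProfile z ((complexTz z)^[n] f) w := by
  induction n generalizing f with
  | zero => rfl
  | succ n ih =>
    have hderiv : deriv (displacedProfile z f w) = displacedProfile z (complexTz z f) w :=
      funext fun s => (hasDerivAt_displacedProfile z hf w s).deriv
    rw [iteratedDeriv_succ', hderiv, ih (differentiable_complexTz z hf),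
      Function.iterate_succ_apply]

theorem differentiable_displacedProfile (z : ℂ) {f : ℂ → ℂ} (hf : Differentiable ℂ f)
    (w : ℂ) : Differentiable ℂ (displacedProfile z f w) :=
  fun s => (hasDerivAt_displacedProfile z hf w s).differentiableAt

theorem hasSum_iterate_complexTz (z : ℂ) {f : ℂ → ℂ} (hf : Differentiable ℂ f) (w : ℂ) :
    HasSum (fun n : ℕ => (1 / (n.factorial : ℂ)) * (complexTz z)^[n] f w)
      (f (w - conj z) * Complex.exp (-(‖z‖ : ℂ) ^ 2 / 2) * Complex.exp (z * w)) := by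
  have htaylor := Complex.hasSum_taylorSeries_of_entire
    (differentiable_displacedProfile z hf w) 0 1
  simp only [iteratedDeriv_displacedProfile z hf w, displacedProfile, sub_zero, one_pow,
    smul_eq_mul, one_mul, zero_mul, zero_pow two_ne_zero, zero_div, Complex.exp_zero,
    mul_one] at htaylor
  have hvalue : f (w - conj z) * Complex.exp (-(‖z‖ : ℂ) ^ 2 / 2) * Complex.exp (z * w)
      = f (w - conj z) * Complex.exp (z * w - z * conj z / 2) := by
    rw [Complex.mul_conj', mul_assoc, ← Complex.exp_add]
    ring_nf
  simpa only [one_div, hvalue] using htaylor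

theorem displacement_series_on_monomials (z : ℂ) (l : ℕ) (x : ℝ) :
    Tendsto (fun N : ℕ => ∑ n ∈ Finset.range N,
        (1 / (n.factorial : ℂ)) * ((Tz z)^[n] (fun y : ℝ => (y : ℂ) ^ l)) x)
      atTop (nhds (((x : ℂ) - conj z) ^ l *
        Complex.exp (-(‖z‖ : ℂ) ^ 2 / 2) * Complex.exp (z * x))) := by
  have hpow : Differentiable ℂ (fun w : ℂ => w ^ l) := differentiable_id.pow l
  have hiterate (n : ℕ) : (Tz z)^[n] (fun y : ℝ => (y : ℂ) ^ l) x
      = (complexTz z)^[n] (fun w : ℂ => w ^ l) x :=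
    congrFun (iterate_Tz_comp_ofReal z hpow n) x
  simp only [hiterate]
  exact (hasSum_iterate_complexTz z hpow x).tendsto_sum_nat
end

section
/- For fixed z ∈ ℂ, define the operator U_z on smooth functions f : ℝ → ℂ by (U_z f)(x) = conj(z) f'(x) − z x f(x). Then for every smooth f : ℝ → ℂ and every n ∈ ℕ, (1/n!) (U_zⁿ f)(0) = ∑_{k=0}^{⌊n/2⌋} (−1)^k |z|^{2k} conj(z)^{n−2k} f^{(n−2k)}(0) / (2^k (n−2k)! k!), where U_zⁿ denotes the n-fold iterate of U_z and f^{(m)} the m-th derivative of f. -/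
open ComplexConjugate

/-- The operator `U_z f = conj z f'(x) − z x f(x)`. -/
noncomputable def Uz (z : ℂ) (f : ℝ → ℂ) : ℝ → ℂ :=
  fun x => conj z * deriv f x - z * (x : ℂ) * f x

noncomputable def Gg (z : ℂ) (f : ℝ → ℂ) (m : ℕ) : ℝ → ℂ :=
  fun x => ∑ i ∈ Finset.range (m+1),
    ((m.choose i : ℂ) * (conj z)^(m-i)) * ((-(z * x))^i * iteratedDeriv (m-i) f x)

noncomputable def Gd (z : ℂ) (f : ℝ → ℂ) (m : ℕ) : ℝ → ℂ :=
  fun x => ∑ i ∈ Finset.range (m+1),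
    ((m.choose i : ℂ) * (conj z)^(m-i)) *
      (((i:ℂ) * (-(z * x))^(i-1) * (-z)) * iteratedDeriv (m-i) f x
        + (-(z * x))^i * iteratedDeriv (m-i+1) f x)

lemma hasDerivAt_pow_lin (z : ℂ) (x : ℝ) (i : ℕ) :
    HasDerivAt (fun x : ℝ => (-(z * x))^i) ((i:ℂ) * (-(z * x))^(i-1) * (-z)) x := by
  have h0 : HasDerivAt (fun x : ℝ => ((x:ℂ))) 1 x := by
    simpa using (hasDerivAt_id x).ofReal_comp
  have h1 : HasDerivAt (fun x : ℝ => -(z * (x:ℂ))) (-z) x := by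
    have := HasDerivAt.const_mul (c := z) h0
    simpa using this.fun_neg
  have h2 := (hasDerivAt_pow i (-(z * (x:ℝ):ℂ))).comp x h1
  simpa [Function.comp_def, mul_comm] using h2

lemma hasDerivAt_Gg (z : ℂ) (f : ℝ → ℂ) (hf : ContDiff ℝ (⊤ : ℕ∞) f) (m : ℕ) (x : ℝ) :
    HasDerivAt (Gg z f m) (Gd z f m x) x := by
  apply HasDerivAt.fun_sum
  intro i _
  have hg : HasDerivAt (iteratedDeriv (m-i) f) (iteratedDeriv (m-i+1) f x) x := by
    rw [iteratedDeriv_succ]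
    exact ((hf.differentiable_iteratedDeriv _ (WithTop.coe_lt_coe.mpr (ENat.coe_lt_top (m-i)))) x).hasDerivAt
  exact ((hasDerivAt_pow_lin z x i).mul hg).const_mul _

lemma Uz_Gg (z : ℂ) (f : ℝ → ℂ) (hf : ContDiff ℝ (⊤ : ℕ∞) f) (m : ℕ) (x : ℝ) :
    Uz z (Gg z f m) x
      = Gg z f (m+1) x - (m:ℂ) * (z * conj z) * Gg z f (m-1) x := by
  have hexp : Uz z (Gg z f m) x =
      (∑ i ∈ Finset.range (m+1), ((m.choose i : ℂ) * (conj z)^(m-i)) *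
        ((-(z * x))^(i+1) * iteratedDeriv (m-i) f x))
      + (∑ i ∈ Finset.range (m+1), ((m.choose i : ℂ) * (conj z)^(m-i+1)) *
        ((-(z * x))^i * iteratedDeriv (m-i+1) f x))
      - (∑ i ∈ Finset.range (m+1), ((m.choose i : ℂ) * (i:ℂ)) * (z * conj z) *
        (conj z)^(m-i) * ((-(z * x))^(i-1) * iteratedDeriv (m-i) f x)) := by
    rw [Uz, (hasDerivAt_Gg z f hf m x).deriv]
    simp only [Gd, Gg, Finset.mul_sum, ← Finset.sum_add_distrib, ← Finset.sum_sub_distrib]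
    refine Finset.sum_congr rfl fun i _ => by ring
  rw [hexp]
  have hC : (∑ i ∈ Finset.range (m+1), ((m.choose i : ℂ) * (i:ℂ)) * (z * conj z) *
        (conj z)^(m-i) * ((-(z * x))^(i-1) * iteratedDeriv (m-i) f x))
      = (m:ℂ) * (z * conj z) * Gg z f (m-1) x := by
    cases m with
    | zero => simp [Gg]
    | succ m' =>
      rw [Finset.sum_range_succ']
      simp only [Nat.cast_zero, mul_zero, zero_mul, add_zero, Nat.succ_sub_succ,
        Nat.succ_sub_one, Nat.sub_zero]
      rw [Gg, Finset.mul_sum]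
      refine Finset.sum_congr rfl fun i _ => ?_
      have hch : (((m'+1).choose (i+1) * (i+1) : ℕ) : ℂ) = (((m'+1) * m'.choose i : ℕ) : ℂ) := by
        rw [← Nat.add_one_mul_choose_eq m' i]
      push_cast at hch ⊢
      linear_combination ((z * conj z) * (conj z)^(m'-i) *
        ((-(z * x))^i * iteratedDeriv (m'-i) f x)) * hch
  rw [hC]
  have hAB : (∑ i ∈ Finset.range (m+1), ((m.choose i : ℂ) * (conj z)^(m-i)) *
        ((-(z * x))^(i+1) * iteratedDeriv (m-i) f x))
      + (∑ i ∈ Finset.range (m+1), ((m.choose i : ℂ) * (conj z)^(m-i+1)) *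
        ((-(z * x))^i * iteratedDeriv (m-i+1) f x))
      = Gg z f (m+1) x := by
    have hB : (∑ i ∈ Finset.range (m+1), ((m.choose i : ℂ) * (conj z)^(m-i+1)) *
          ((-(z * x))^i * iteratedDeriv (m-i+1) f x))
        = (∑ i ∈ Finset.range (m+1), ((m.choose (i+1) : ℂ) * (conj z)^(m-i)) *
          ((-(z * x))^(i+1) * iteratedDeriv (m-i) f x))
          + ((1:ℂ) * (conj z)^(m+1)) * ((-(z * x))^0 * iteratedDeriv (m+1) f x) := by
      rw [Finset.sum_range_succ']
      congr 1
      · rw [Finset.sum_range_succ]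
        have hz : (m.choose (m+1) : ℂ) = 0 := by
          simp [Nat.choose_eq_zero_of_lt (Nat.lt_succ_self m)]
        rw [hz]
        simp only [zero_mul, mul_zero, add_zero]
        refine (Finset.sum_congr rfl fun i hi => ?_)
        have hi' : i < m := Finset.mem_range.mp hi
        have h1 : m - (i+1) + 1 = m - i := by omega
        rw [h1]
      · simp
    have hRHS : Gg z f (m+1) x
        = (∑ i ∈ Finset.range (m+1), ((m.choose i : ℂ) * (conj z)^(m-i)) *
            ((-(z * x))^(i+1) * iteratedDeriv (m-i) f x))
          + ((∑ i ∈ Finset.range (m+1), ((m.choose (i+1) : ℂ) * (conj z)^(m-i)) *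
            ((-(z * x))^(i+1) * iteratedDeriv (m-i) f x))
            + ((1:ℂ) * (conj z)^(m+1)) * ((-(z * x))^0 * iteratedDeriv (m+1) f x)) := by
      rw [Gg, Finset.sum_range_succ']
      have e1 : (∑ i ∈ Finset.range (m+1), (((m+1).choose (i+1) : ℂ) * (conj z)^(m+1-(i+1))) *
            ((-(z * x))^(i+1) * iteratedDeriv (m+1-(i+1)) f x))
          = (∑ i ∈ Finset.range (m+1), ((m.choose i : ℂ) * (conj z)^(m-i)) *
              ((-(z * x))^(i+1) * iteratedDeriv (m-i) f x))
            + (∑ i ∈ Finset.range (m+1), ((m.choose (i+1) : ℂ) * (conj z)^(m-i)) *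
              ((-(z * x))^(i+1) * iteratedDeriv (m-i) f x)) := by
        rw [← Finset.sum_add_distrib]
        refine Finset.sum_congr rfl fun i _ => ?_
        have h1 : m + 1 - (i+1) = m - i := Nat.succ_sub_succ m i
        rw [h1, Nat.choose_succ_succ]
        push_cast
        ring
      rw [e1]
      have e2 : (((m+1).choose 0 : ℂ) * (conj z)^(m+1-0)) *
          ((-(z * x))^0 * iteratedDeriv (m+1-0) f x)
          = ((1:ℂ) * (conj z)^(m+1)) * ((-(z * x))^0 * iteratedDeriv (m+1) f x) := by
        simp
      rw [e2]
      ring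
    rw [hB, hRHS]
  rw [hAB]

noncomputable def bb (z : ℂ) (n k : ℕ) : ℂ :=
  if 2*k ≤ n then
    (n.factorial : ℂ) / (((n - 2*k).factorial : ℂ) * (k.factorial : ℂ)) * (-(z * conj z)/2)^k
  else 0

lemma bb_rec (z : ℂ) (n k : ℕ) :
    bb z (n+1) k = bb z n k -
      (if k = 0 then 0 else ((n - 2*(k-1) : ℕ) : ℂ) * (z * conj z) * bb z n (k-1)) := by
  match k with
  | 0 =>
    simp only [bb, Nat.mul_zero, Nat.zero_le, if_pos, Nat.sub_zero, pow_zero, mul_one,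
      if_true, sub_zero, reduceIte]
    rw [Nat.factorial_zero]
    have h1 : ((n+1).factorial : ℂ) ≠ 0 := by exact_mod_cast (n+1).factorial_ne_zero
    have h2 : ((n).factorial : ℂ) ≠ 0 := by exact_mod_cast n.factorial_ne_zero
    field_simp
  | (j+1) =>
    rcases Nat.lt_trichotomy (2*(j+1)) (n+1) with h|h|h
    · -- 2*(j+1) ≤ n
      have h' : 2*(j+1) ≤ n := by omega
      obtain ⟨d, rfl⟩ : ∃ d, n = 2*(j+1) + d := ⟨n - 2*(j+1), by omega⟩
      have e1 : 2*(j+1)+d+1 - 2*(j+1) = d+1 := by omega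
      have e2 : 2*(j+1)+d - 2*(j+1) = d := by omega
      have e3 : 2*(j+1)+d - 2*j = d+2 := by omega
      simp only [bb, if_pos (show 2*(j+1) ≤ 2*(j+1)+d+1 by omega),
        if_pos (show 2*(j+1) ≤ 2*(j+1)+d by omega),
        if_pos (show 2*j ≤ 2*(j+1)+d by omega),
        if_neg (show ¬ (j+1 = 0) by omega), Nat.add_sub_cancel, e1, e2, e3,
        Nat.succ_sub_one]
      have hd : (d.factorial : ℂ) ≠ 0 := by exact_mod_cast d.factorial_ne_zero
      have hj : (j.factorial : ℂ) ≠ 0 := by exact_mod_cast j.factorial_ne_zero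
      have hd1 : ((d+1).factorial : ℂ) ≠ 0 := by exact_mod_cast (d+1).factorial_ne_zero
      have hd2 : ((d+2).factorial : ℂ) ≠ 0 := by exact_mod_cast (d+2).factorial_ne_zero
      have hj1 : ((j+1).factorial : ℂ) ≠ 0 := by exact_mod_cast (j+1).factorial_ne_zero
      field_simp
      rw [Nat.factorial_succ (2*(j+1)+d), Nat.factorial_succ (d+1), Nat.factorial_succ d,
        Nat.factorial_succ j]
      push_cast
      ring
    · -- 2*(j+1) = n+1
      obtain ⟨rfl⟩ : n = 2*j+1 := by omega
      have e1 : 2*j+1+1 - 2*(j+1) = 0 := by omega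
      have e2 : 2*j+1 - 2*j = 1 := by omega
      simp only [bb, if_pos (show 2*(j+1) ≤ 2*j+1+1 by omega),
        if_neg (show ¬ 2*(j+1) ≤ 2*j+1 by omega),
        if_pos (show 2*j ≤ 2*j+1 by omega),
        if_neg (show ¬ (j+1 = 0) by omega), e1, e2, Nat.succ_sub_one,
        Nat.factorial_zero, Nat.factorial_one]
      have hj : (j.factorial : ℂ) ≠ 0 := by exact_mod_cast j.factorial_ne_zero
      have hj1 : ((j+1).factorial : ℂ) ≠ 0 := by exact_mod_cast (j+1).factorial_ne_zero
      field_simp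
      rw [Nat.factorial_succ (2*j+1), Nat.factorial_succ j]
      push_cast
      ring
    · -- 2*(j+1) > n+1
      have e1 : n - 2*j = 0 := by omega
      simp [bb, e1, show ¬ 2*(j+1) ≤ n+1 by omega, show ¬ 2*(j+1) ≤ n by omega]

lemma iter_Uz (z : ℂ) (f : ℝ → ℂ) (hf : ContDiff ℝ (⊤ : ℕ∞) f) (n : ℕ) :
    (Uz z)^[n] f = fun x => ∑ k ∈ Finset.range (n+1), bb z n k * Gg z f (n - 2*k) x := by
  induction n with
  | zero =>
    funext x
    simp [bb, Gg, iteratedDeriv_zero]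
  | succ n ih =>
    rw [Function.iterate_succ_apply', ih]
    funext x
    have hder : ∀ m, deriv (Gg z f m) x = Gd z f m x :=
      fun m => (hasDerivAt_Gg z f hf m x).deriv
    have hstep : Uz z (fun x => ∑ k ∈ Finset.range (n+1), bb z n k * Gg z f (n-2*k) x) x
        = ∑ k ∈ Finset.range (n+1), bb z n k * Uz z (Gg z f (n-2*k)) x := by
      have hd : HasDerivAt (fun x => ∑ k ∈ Finset.range (n+1), bb z n k * Gg z f (n-2*k) x)
          (∑ k ∈ Finset.range (n+1), bb z n k * Gd z f (n-2*k) x) x :=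
        HasDerivAt.fun_sum fun k _ => (hasDerivAt_Gg z f hf _ x).const_mul _
      simp only [Uz, hd.deriv, hder, Finset.mul_sum, ← Finset.sum_sub_distrib]
      exact Finset.sum_congr rfl fun k _ => by ring
    rw [hstep]
    simp only [Uz_Gg z f hf]
    set H := z * conj z with hH
    set e : ℕ → ℂ := fun k => if k = 0 then 0 else
      ((n - 2*(k-1) : ℕ) : ℂ) * H * bb z n (k-1) * Gg z f (n+1-2*k) x with he
    have hA : ∀ k ∈ Finset.range (n+1),
        bb z n k * (Gg z f (n-2*k+1) x - ((n-2*k : ℕ):ℂ) * H * Gg z f (n-2*k-1) x)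
          = bb z n k * Gg z f (n+1-2*k) x - e (k+1) := by
      intro k _
      have hek : e (k+1) = ((n - 2*k : ℕ) : ℂ) * H * bb z n k * Gg z f (n+1-2*(k+1)) x := by
        simp [he]
      by_cases h : 2*k ≤ n
      · rw [mul_sub, show n - 2*k + 1 = n + 1 - 2*k from by omega, hek]
        by_cases h2 : n - 2*k = 0
        · rw [h2]; simp
        · rw [show n - 2*k - 1 = n+1-2*(k+1) from by omega]
          ring
      · have hb : bb z n k = 0 := by simp [bb, h]
        rw [hb, hek]
        have h2 : n - 2*k = 0 := by omega
        rw [h2]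
        simp
    rw [Finset.sum_congr rfl hA, Finset.sum_sub_distrib]
    have h1 : ∑ k ∈ Finset.range (n+1), bb z n k * Gg z f (n+1-2*k) x
        = ∑ k ∈ Finset.range (n+2), bb z n k * Gg z f (n+1-2*k) x := by
      have hb : bb z n (n+1) = 0 := by simp [bb]; omega
      conv_rhs => rw [Finset.sum_range_succ]
      rw [hb]; ring
    have h2 : ∑ k ∈ Finset.range (n+1), e (k+1) = ∑ k ∈ Finset.range (n+2), e k := by
      conv_rhs => rw [Finset.sum_range_succ']
      simp [he]
    rw [h1, h2, ← Finset.sum_sub_distrib]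
    refine Finset.sum_congr rfl fun k _ => ?_
    rw [bb_rec z n k]
    by_cases hk0 : k = 0
    · simp [he, hk0]
    · simp only [he, if_neg hk0]
      ring

lemma Gg_zero (z : ℂ) (f : ℝ → ℂ) (m : ℕ) :
    Gg z f m 0 = (conj z)^m * iteratedDeriv m f 0 := by
  simp only [Gg]
  rw [Finset.sum_eq_single 0]
  · simp
  · intro i _ hne
    have : (-(z * ((0:ℝ):ℂ)))^i = 0 := by
      simp [zero_pow hne]
    rw [this]
    ring
  · intro h
    exact absurd (Finset.mem_range.mpr (Nat.succ_pos m)) h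

theorem iterates_of_Uz_at_zero
    (z : ℂ) (f : ℝ → ℂ) (hf : ContDiff ℝ (⊤ : ℕ∞) f) (n : ℕ) :
    (1 / (n.factorial : ℂ)) * ((Uz z)^[n] f) 0 =
      ∑ k ∈ Finset.range (n / 2 + 1),
        (-1) ^ k * (‖z‖ : ℂ) ^ (2 * k) * (conj z) ^ (n - 2 * k) *
          iteratedDeriv (n - 2 * k) f 0 /
          ((2 : ℂ) ^ k * ((n - 2 * k).factorial : ℂ) * (k.factorial : ℂ)) := by
  rw [iter_Uz z f hf n]
  simp only [Gg_zero, Finset.mul_sum]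
  rw [← Finset.sum_subset (Finset.range_subset_range.mpr (show n/2+1 ≤ n+1 by omega))
    (fun k _ hk => by
      have : ¬ (2*k ≤ n) := by
        have := Finset.mem_range.not.mp hk
        omega
      simp [bb, this])]
  refine Finset.sum_congr rfl fun k hk => ?_
  have h2k : 2*k ≤ n := by
    have := Finset.mem_range.mp hk
    omega
  have hnorm : ((‖z‖:ℝ):ℂ)^(2*k) = (z * conj z)^k := by
    rw [pow_mul]
    congr 1
    rw [Complex.mul_conj]
    norm_cast
    rw [Complex.normSq_eq_norm_sq]
  rw [hnorm, bb, if_pos h2k]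
  have hN : ((n.factorial : ℕ) : ℂ) ≠ 0 := by exact_mod_cast n.factorial_ne_zero
  have hD : (((n-2*k).factorial : ℕ) : ℂ) ≠ 0 := by exact_mod_cast (n-2*k).factorial_ne_zero
  have hK : ((k.factorial : ℕ) : ℂ) ≠ 0 := by exact_mod_cast k.factorial_ne_zero
  field_simp
  have h2 : ((-1/2 : ℂ))^k * 2^k = (-1)^k := by rw [← mul_pow]; norm_num
  linear_combination (z ^ k * conj z ^ k * conj z ^ (n - 2 * k) * iteratedDeriv (n - 2 * k) f 0) * h2
end

section
/- For fixed z ∈ ℂ, define the operator U_z on smooth functions f : ℝ → ℂ by (U_z f)(x) = conj(z) f'(x) − z x f(x). Let F : ℂ → ℂ be an entire function and let f = F|_ℝ be its restriction to the real line. Then the series ∑_{n=0}^∞ (1/n!) (U_zⁿ f)(0) converges and its sum equals e^{−|z|²/2} F(conj z). -/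
open Filter ComplexConjugate

/-!
With `2 a conj z = z`, the Gaussian `exp (a x²)` conjugates `U_z` to `conj z · d/dx`:
`U_z (exp (a x²) G) = exp (a x²) conj z G'`. Writing `F = exp (a w²) K` with the entire function
`K w = exp (-a w²) F w`, the `n`-th term of the series is `(conj z)ⁿ K⁽ⁿ⁾(0) / n!`, so the series
is the Taylor series of `K` at `0` evaluated at `conj z`, whose sum is
`K (conj z) = exp (-|z|² / 2) F (conj z)`.
-/

open Complex

section

variable {z a : ℂ}

theorem Uz_gaussian_mul (h : 2 * a * conj z = z) {G : ℂ → ℂ} (hG : Differentiable ℂ G) :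
    Uz z (fun x : ℝ => cexp (a * x ^ 2) * G x) =
      fun x : ℝ => cexp (a * x ^ 2) * (conj z * deriv G x) := by
  funext x
  have hgauss : HasDerivAt (fun w : ℂ => cexp (a * w ^ 2))
      (cexp (a * x ^ 2) * (2 * a * x)) x := by
    simpa [mul_comm, mul_left_comm, mul_assoc] using
      ((hasDerivAt_pow 2 (x : ℂ)).const_mul a).cexp
  have hderiv : HasDerivAt (fun y : ℝ => cexp (a * (y : ℂ) ^ 2) * G y) _ x :=
    (hgauss.mul (hG x).hasDerivAt).comp_ofReal
  simp only [Uz, hderiv.deriv]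
  linear_combination ((x : ℂ) * cexp (a * x ^ 2) * G x) * h

theorem Uz_iterate_gaussian_mul (h : 2 * a * conj z = z) {G : ℂ → ℂ} (hG : Differentiable ℂ G)
    (n : ℕ) :
    (Uz z)^[n] (fun x : ℝ => cexp (a * x ^ 2) * G x) =
      fun x : ℝ => cexp (a * x ^ 2) * (conj z ^ n * iteratedDeriv n G x) := by
  induction n with
  | zero => simp
  | succ n ih =>
    have hGn : Differentiable ℂ (iteratedDeriv n G) :=
      hG.contDiff.differentiable_iteratedDeriv n (WithTop.coe_lt_top _)
    rw [Function.iterate_succ_apply', ih, Uz_gaussian_mul h (hGn.const_mul _),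
      deriv_const_mul_field', ← iteratedDeriv_succ]
    funext x
    ring

end

theorem displacement_series_on_entire_restriction
    (z : ℂ) (F : ℂ → ℂ) (hF : Differentiable ℂ F) (f : ℝ → ℂ)
    (hf : ∀ x : ℝ, f x = F x) :
    Tendsto (fun N : ℕ => ∑ n ∈ Finset.range N,
        (1 / (n.factorial : ℂ)) * ((Uz z)^[n] f) 0)
      atTop (nhds (Complex.exp (-(‖z‖ : ℂ) ^ 2 / 2) * F (conj z))) := by
  set a := z / (2 * conj z)
  set K : ℂ → ℂ := fun w => cexp (-(a * w ^ 2)) * F w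
  have ha : 2 * a * conj z = z := by
    -- for `z = 0` the junk value `a = 0` still works
    rcases eq_or_ne z 0 with rfl | hz
    · simp
    · have : conj z ≠ 0 := (map_ne_zero _).mpr hz
      simp only [a]
      field_simp
  have hK : Differentiable ℂ K := (differentiable_exp.comp (by fun_prop)).mul hF
  have hfK : f = fun x : ℝ => cexp (a * x ^ 2) * K x := by
    funext x
    simp [K, hf, ← mul_assoc, ← Complex.exp_add]
  have hKconj : K (conj z) = cexp (-(‖z‖ : ℂ) ^ 2 / 2) * F (conj z) := by
    have : a * conj z ^ 2 = z * conj z / 2 := by linear_combination conj z / 2 * ha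
    simp only [K, this, mul_conj, normSq_eq_norm_sq]
    push_cast
    ring_nf
  rw [← hKconj]
  refine (hasSum_taylorSeries_of_entire hK 0 (conj z)).tendsto_sum_nat.congr fun N => ?_
  refine Finset.sum_congr rfl fun n _ => ?_
  simp [hfK, Uz_iterate_gaussian_mul ha hK, smul_eq_mul, div_eq_inv_mul]
end
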